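/- There exists a unique ℚ-algebra homomorphism ψ_ı : U^ı → U^ı satisfying ψ_ı(a·x) = bar(a)·ψ_ı(x) for all a ∈ K and x ∈ U^ı, together with ψ_ı(k_i) = k_i^{−1}, ψ_ı(e_i) = e_i, ψ_ı(f_i) = f_i for 1 ≤ i ≤ r, and ψ_ı(t) = t. Moreover ψ_ı is an involution: ψ_ı ∘ ψ_ı = id. -/
import Mathlib


attribute [local instance] Classical.propDecidable

noncomputable section

/-- The field `ℚ(p,q)`. -/
abbrev K2 : Type := FractionRing (MvPolynomial (Fin 2) ℚ)

noncomputable def pp : K2 := algebraMap (MvPolynomial (Fin 2) ℚ) K2 (MvPolynomial.X 0)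
noncomputable def qq : K2 := algebraMap (MvPolynomial (Fin 2) ℚ) K2 (MvPolynomial.X 1)

/-- Generators of `U^ı`: `e_i, f_i, k_i, k_i⁻¹` for `1 ≤ i ≤ r` (the term `i : Fin r` encodes
the index `i.val + 1`), together with `t`. -/
inductive UiGen (r : ℕ) : Type
  | e : Fin r → UiGen r
  | f : Fin r → UiGen r
  | k : Fin r → UiGen r
  | kinv : Fin r → UiGen r
  | t : UiGen r

/-- The free algebra on the generators. -/
abbrev FUi (r : ℕ) : Type := FreeAlgebra K2 (UiGen r)

noncomputable def ge {r : ℕ} (i : Fin r) : FUi r := FreeAlgebra.ι K2 (UiGen.e i)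
noncomputable def gf {r : ℕ} (i : Fin r) : FUi r := FreeAlgebra.ι K2 (UiGen.f i)
noncomputable def gk {r : ℕ} (i : Fin r) : FUi r := FreeAlgebra.ι K2 (UiGen.k i)
noncomputable def gkinv {r : ℕ} (i : Fin r) : FUi r := FreeAlgebra.ι K2 (UiGen.kinv i)
noncomputable def gt {r : ℕ} : FUi r := FreeAlgebra.ι K2 UiGen.t

/-- `c_{ij} = 2 δ_{ij} - δ_{|i-j|,1}` (indices `i.val+1`, `j.val+1`). -/
def cij {r : ℕ} (i j : Fin r) : ℤ :=
  2 * (if i = j then 1 else 0) - (if i.val + 1 = j.val ∨ j.val + 1 = i.val then 1 else 0)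

/-- The defining relations of `U^ı`. -/
inductive UiRel (r : ℕ) : FUi r → FUi r → Prop
  | kkinv (i : Fin r) : UiRel r (gk i * gkinv i) 1
  | kinvk (i : Fin r) : UiRel r (gkinv i * gk i) 1
  | kk (i j : Fin r) : UiRel r (gk i * gk j) (gk j * gk i)
  | ke (i j : Fin r) : UiRel r (gk i * ge j) ((qq ^ cij i j) • (ge j * gk i))
  | kf (i j : Fin r) : UiRel r (gk i * gf j) ((qq ^ (-cij i j)) • (gf j * gk i))
  | kt (i : Fin r) : UiRel r (gk i * gt) (gt * gk i)
  | ef (i j : Fin r) : UiRel r (ge i * gf j - gf j * ge i)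
      (if i = j then ((qq - qq⁻¹)⁻¹) • (gk i - gkinv i) else 0)
  | ee (i j : Fin r) (h : i.val + 1 < j.val ∨ j.val + 1 < i.val) :
      UiRel r (ge i * ge j) (ge j * ge i)
  | ff (i j : Fin r) (h : i.val + 1 < j.val ∨ j.val + 1 < i.val) :
      UiRel r (gf i * gf j) (gf j * gf i)
  | et (i : Fin r) (h : 1 ≤ i.val) : UiRel r (ge i * gt) (gt * ge i)
  | ft (i : Fin r) (h : 1 ≤ i.val) : UiRel r (gf i * gt) (gt * gf i)
  | serre_e (i j : Fin r) (h : i.val + 1 = j.val ∨ j.val + 1 = i.val) :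
      UiRel r (ge i * ge i * ge j + ge j * (ge i * ge i)) ((qq + qq⁻¹) • (ge i * ge j * ge i))
  | serre_f (i j : Fin r) (h : i.val + 1 = j.val ∨ j.val + 1 = i.val) :
      UiRel r (gf i * gf i * gf j + gf j * (gf i * gf i)) ((qq + qq⁻¹) • (gf i * gf j * gf i))
  | eet (i : Fin r) (h : i.val = 0) :
      UiRel r (ge i * ge i * gt + gt * (ge i * ge i)) ((qq + qq⁻¹) • (ge i * gt * ge i))
  | fft (i : Fin r) (h : i.val = 0) :
      UiRel r (gf i * gf i * gt + gt * (gf i * gf i)) ((qq + qq⁻¹) • (gf i * gt * gf i))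
  | tte (i : Fin r) (h : i.val = 0) :
      UiRel r (gt * gt * ge i + ge i * (gt * gt)) ((qq + qq⁻¹) • (gt * ge i * gt) + ge i)
  | ttf (i : Fin r) (h : i.val = 0) :
      UiRel r (gt * gt * gf i + gf i * (gt * gt)) ((qq + qq⁻¹) • (gt * gf i * gt) + gf i)

/-- The coideal algebra `U^ı`, presented by generators and relations. -/
abbrev Ui (r : ℕ) : Type := RingQuot (UiRel r)

noncomputable def ue {r : ℕ} (i : Fin r) : Ui r := RingQuot.mkAlgHom K2 (UiRel r) (ge i)
noncomputable def uf {r : ℕ} (i : Fin r) : Ui r := RingQuot.mkAlgHom K2 (UiRel r) (gf i)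
noncomputable def uk {r : ℕ} (i : Fin r) : Ui r := RingQuot.mkAlgHom K2 (UiRel r) (gk i)
noncomputable def ukinv {r : ℕ} (i : Fin r) : Ui r := RingQuot.mkAlgHom K2 (UiRel r) (gkinv i)
noncomputable def ut {r : ℕ} : Ui r := RingQuot.mkAlgHom K2 (UiRel r) gt

/-- The conditions characterizing the bar involution `ψ_ı` of `U^ı` relative to the bar
involution `bar` of `ℚ(p,q)`. -/
def psiCond (r : ℕ) (bar : K2 →+* K2) (ψ : Ui r →+* Ui r) : Prop :=
  (∀ (a : K2) (x : Ui r), ψ (a • x) = bar a • ψ x) ∧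
  (∀ i : Fin r, ψ (uk i) = ukinv i) ∧
  (∀ i : Fin r, ψ (ue i) = ue i) ∧
  (∀ i : Fin r, ψ (uf i) = uf i) ∧
  ψ ut = ut


/-! ### Auxiliary lemmas for the bar involution -/

lemma qq_ne_zero : qq ≠ 0 := by
  intro h
  have h2 : (MvPolynomial.X 1 : MvPolynomial (Fin 2) ℚ) = 0 :=
    IsFractionRing.injective (MvPolynomial (Fin 2) ℚ) K2 (by rw [map_zero]; exact h)
  exact MvPolynomial.X_ne_zero _ h2

lemma bar_zpow (bar : K2 →+* K2) (hq : bar qq = qq⁻¹) (c : ℤ) : bar (qq ^ c) = qq ^ (-c) := by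
  rw [map_zpow₀, hq, inv_zpow, ← zpow_neg]

lemma bar_qplus (bar : K2 →+* K2) (hq : bar qq = qq⁻¹) : bar (qq + qq⁻¹) = qq + qq⁻¹ := by
  rw [map_add, map_inv₀, hq, inv_inv, add_comm]

lemma bar_qminus (bar : K2 →+* K2) (hq : bar qq = qq⁻¹) :
    bar ((qq - qq⁻¹)⁻¹) = -((qq - qq⁻¹)⁻¹) := by
  rw [map_inv₀, map_sub, map_inv₀, hq, inv_inv, ← neg_sub, inv_neg]

lemma bar_bar (bar : K2 →+* K2) (hp : bar pp = pp⁻¹) (hq : bar qq = qq⁻¹) (a : K2) :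
    bar (bar a) = a := by
  have h : bar.comp bar = RingHom.id K2 := by
    apply IsLocalization.ringHom_ext (nonZeroDivisors (MvPolynomial (Fin 2) ℚ))
    apply MvPolynomial.ringHom_ext
    · intro c
      have hc : algebraMap (MvPolynomial (Fin 2) ℚ) K2 (MvPolynomial.C c) = (c : K2) :=
        eq_ratCast ((algebraMap (MvPolynomial (Fin 2) ℚ) K2).comp MvPolynomial.C) c
      simp [hc, map_ratCast]
    · intro i
      fin_cases i
      · show bar (bar pp) = pp
        rw [hp, map_inv₀, hp, inv_inv]
      · show bar (bar qq) = qq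
        rw [hq, map_inv₀, hq, inv_inv]
  exact RingHom.congr_fun h a

/-! ### Relations in `Ui r` -/

section UiRels
variable {r : ℕ}

lemma urel_kkinv (i : Fin r) : uk i * ukinv i = 1 := by
  have h := RingQuot.mkAlgHom_rel K2 (UiRel.kkinv (r := r) i)
  simpa [uk, ukinv, map_mul, map_one] using h

lemma urel_kinvk (i : Fin r) : ukinv i * uk i = 1 := by
  have h := RingQuot.mkAlgHom_rel K2 (UiRel.kinvk (r := r) i)
  simpa [uk, ukinv, map_mul, map_one] using h

lemma urel_kk (i j : Fin r) : uk i * uk j = uk j * uk i := by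
  have h := RingQuot.mkAlgHom_rel K2 (UiRel.kk (r := r) i j)
  simpa [uk, map_mul] using h

lemma urel_ke (i j : Fin r) : uk i * ue j = (qq ^ cij i j) • (ue j * uk i) := by
  have h := RingQuot.mkAlgHom_rel K2 (UiRel.ke (r := r) i j)
  simpa [uk, ue, map_mul, map_smul] using h

lemma urel_kf (i j : Fin r) : uk i * uf j = (qq ^ (-cij i j)) • (uf j * uk i) := by
  have h := RingQuot.mkAlgHom_rel K2 (UiRel.kf (r := r) i j)
  simpa [uk, uf, map_mul, map_smul] using h

lemma urel_kt (i : Fin r) : uk i * ut = ut * uk i := by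
  have h := RingQuot.mkAlgHom_rel K2 (UiRel.kt (r := r) i)
  simpa [uk, ut, map_mul] using h

lemma urel_ef_eq (i : Fin r) :
    ue i * uf i - uf i * ue i = ((qq - qq⁻¹)⁻¹) • (uk i - ukinv i) := by
  have h := RingQuot.mkAlgHom_rel K2 (UiRel.ef (r := r) i i)
  rw [if_pos rfl] at h
  simpa [ue, uf, uk, ukinv, map_mul, map_sub, map_smul] using h

lemma urel_ef_ne (i j : Fin r) (hij : i ≠ j) :
    ue i * uf j - uf j * ue i = 0 := by
  have h := RingQuot.mkAlgHom_rel K2 (UiRel.ef (r := r) i j)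
  rw [if_neg hij] at h
  simpa [ue, uf, map_mul, map_sub] using h

lemma urel_ee (i j : Fin r) (h : i.val + 1 < j.val ∨ j.val + 1 < i.val) :
    ue i * ue j = ue j * ue i := by
  have h2 := RingQuot.mkAlgHom_rel K2 (UiRel.ee (r := r) i j h)
  simpa [ue, map_mul] using h2

lemma urel_ff (i j : Fin r) (h : i.val + 1 < j.val ∨ j.val + 1 < i.val) :
    uf i * uf j = uf j * uf i := by
  have h2 := RingQuot.mkAlgHom_rel K2 (UiRel.ff (r := r) i j h)
  simpa [uf, map_mul] using h2

lemma urel_et (i : Fin r) (h : 1 ≤ i.val) : ue i * ut = ut * ue i := by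
  have h2 := RingQuot.mkAlgHom_rel K2 (UiRel.et (r := r) i h)
  simpa [ue, ut, map_mul] using h2

lemma urel_ft (i : Fin r) (h : 1 ≤ i.val) : uf i * ut = ut * uf i := by
  have h2 := RingQuot.mkAlgHom_rel K2 (UiRel.ft (r := r) i h)
  simpa [uf, ut, map_mul] using h2

lemma urel_serre_e (i j : Fin r) (h : i.val + 1 = j.val ∨ j.val + 1 = i.val) :
    ue i * ue i * ue j + ue j * (ue i * ue i) = (qq + qq⁻¹) • (ue i * ue j * ue i) := by
  have h2 := RingQuot.mkAlgHom_rel K2 (UiRel.serre_e (r := r) i j h)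
  simpa [ue, map_mul, map_add, map_smul] using h2

lemma urel_serre_f (i j : Fin r) (h : i.val + 1 = j.val ∨ j.val + 1 = i.val) :
    uf i * uf i * uf j + uf j * (uf i * uf i) = (qq + qq⁻¹) • (uf i * uf j * uf i) := by
  have h2 := RingQuot.mkAlgHom_rel K2 (UiRel.serre_f (r := r) i j h)
  simpa [uf, map_mul, map_add, map_smul] using h2

lemma urel_eet (i : Fin r) (h : i.val = 0) :
    ue i * ue i * ut + ut * (ue i * ue i) = (qq + qq⁻¹) • (ue i * ut * ue i) := by
  have h2 := RingQuot.mkAlgHom_rel K2 (UiRel.eet (r := r) i h)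
  simpa [ue, ut, map_mul, map_add, map_smul] using h2

lemma urel_fft (i : Fin r) (h : i.val = 0) :
    uf i * uf i * ut + ut * (uf i * uf i) = (qq + qq⁻¹) • (uf i * ut * uf i) := by
  have h2 := RingQuot.mkAlgHom_rel K2 (UiRel.fft (r := r) i h)
  simpa [uf, ut, map_mul, map_add, map_smul] using h2

lemma urel_tte (i : Fin r) (h : i.val = 0) :
    ut * ut * ue i + ue i * (ut * ut) = (qq + qq⁻¹) • (ut * ue i * ut) + ue i := by
  have h2 := RingQuot.mkAlgHom_rel K2 (UiRel.tte (r := r) i h)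
  simpa [ue, ut, map_mul, map_add, map_smul] using h2

lemma urel_ttf (i : Fin r) (h : i.val = 0) :
    ut * ut * uf i + uf i * (ut * ut) = (qq + qq⁻¹) • (ut * uf i * ut) + uf i := by
  have h2 := RingQuot.mkAlgHom_rel K2 (UiRel.ttf (r := r) i h)
  simpa [uf, ut, map_mul, map_add, map_smul] using h2

/-- Conjugation by `k_i⁻¹` inverts the scalar appearing in conjugation by `k_i`. -/
lemma kinv_comm (i : Fin r) (x : Ui r) (c : ℤ) (h : uk i * x = (qq ^ c) • (x * uk i)) :
    ukinv i * x = (qq ^ (-c)) • (x * ukinv i) := by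
  have h2 : x * uk i = (qq ^ (-c)) • (uk i * x) := by
    rw [h, smul_smul, zpow_neg, inv_mul_cancel₀ (zpow_ne_zero _ qq_ne_zero), one_smul]
  calc ukinv i * x = ukinv i * (x * (uk i * ukinv i)) := by rw [urel_kkinv, mul_one]
    _ = ukinv i * (x * uk i) * ukinv i := by rw [← mul_assoc x, ← mul_assoc]
    _ = (qq ^ (-c)) • (ukinv i * (uk i * x) * ukinv i) := by
        rw [h2, mul_smul_comm, smul_mul_assoc]
    _ = (qq ^ (-c)) • (x * ukinv i) := by
        rw [← mul_assoc (ukinv i), urel_kinvk, one_mul]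

lemma urel_kinve (i j : Fin r) : ukinv i * ue j = (qq ^ (-cij i j)) • (ue j * ukinv i) :=
  kinv_comm i (ue j) (cij i j) (urel_ke i j)

lemma urel_kinvf (i j : Fin r) : ukinv i * uf j = (qq ^ (cij i j)) • (uf j * ukinv i) := by
  have h := kinv_comm i (uf j) (-cij i j) (urel_kf i j)
  rwa [neg_neg] at h

lemma urel_kinvt (i : Fin r) : ukinv i * ut = ut * ukinv i := by
  have h := kinv_comm i ut 0 (by simpa using urel_kt i)
  simpa using h

lemma urel_kinvkinv (i j : Fin r) : ukinv i * ukinv j = ukinv j * ukinv i := by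
  have h1 : ukinv j * uk i = (qq ^ (0 : ℤ)) • (uk i * ukinv j) := by
    have := kinv_comm j (uk i) 0 (by simpa using (urel_kk j i))
    simpa using this
  have h2 := kinv_comm i (ukinv j) 0 (by simpa using h1.symm)
  simpa using h2

end UiRels

/-! ### The semilinear endomorphism -/

/-- The twisted `K2`-algebra structure on `Ui r`, with scalars acting through `bar`. -/
noncomputable def twA (r : ℕ) (bar : K2 →+* K2) : Algebra K2 (Ui r) :=
  ((algebraMap K2 (Ui r)).comp bar).toAlgebra' (fun c x => by
    simp only [RingHom.comp_apply]
    exact Algebra.commutes (bar c) x)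

/-- Images of the generators under the bar involution. -/
noncomputable def psiGen {r : ℕ} : UiGen r → Ui r
  | .e i => ue i
  | .f i => uf i
  | .k i => ukinv i
  | .kinv i => uk i
  | .t => ut

/-- The bar involution on the free algebra, as a ring homomorphism to `Ui r`. -/
noncomputable def psiAux (r : ℕ) (bar : K2 →+* K2) : FUi r →+* Ui r :=
  letI := twA r bar
  (FreeAlgebra.lift K2 (psiGen (r := r)) : FUi r →ₐ[K2] Ui r).toRingHom

lemma psiAux_ι {r : ℕ} (bar : K2 →+* K2) (g : UiGen r) :
    psiAux r bar (FreeAlgebra.ι K2 g) = psiGen g := by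
  letI := twA r bar
  exact FreeAlgebra.lift_ι_apply (psiGen (r := r)) g

lemma psiAux_ge {r : ℕ} (bar : K2 →+* K2) (i : Fin r) : psiAux r bar (ge i) = ue i :=
  psiAux_ι bar (UiGen.e i)
lemma psiAux_gf {r : ℕ} (bar : K2 →+* K2) (i : Fin r) : psiAux r bar (gf i) = uf i :=
  psiAux_ι bar (UiGen.f i)
lemma psiAux_gk {r : ℕ} (bar : K2 →+* K2) (i : Fin r) : psiAux r bar (gk i) = ukinv i :=
  psiAux_ι bar (UiGen.k i)
lemma psiAux_gkinv {r : ℕ} (bar : K2 →+* K2) (i : Fin r) : psiAux r bar (gkinv i) = uk i :=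
  psiAux_ι bar (UiGen.kinv i)
lemma psiAux_gt {r : ℕ} (bar : K2 →+* K2) : psiAux r bar (gt (r := r)) = ut :=
  psiAux_ι bar UiGen.t

lemma psiAux_algebraMap {r : ℕ} (bar : K2 →+* K2) (a : K2) :
    psiAux r bar (algebraMap K2 (FUi r) a) = algebraMap K2 (Ui r) (bar a) := by
  letI := twA r bar
  exact (FreeAlgebra.lift K2 (psiGen (r := r)) : FUi r →ₐ[K2] Ui r).commutes a

lemma psiAux_smul {r : ℕ} (bar : K2 →+* K2) (a : K2) (x : FUi r) :
    psiAux r bar (a • x) = bar a • psiAux r bar x := by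
  rw [Algebra.smul_def, map_mul, psiAux_algebraMap, ← Algebra.smul_def]

lemma psiAux_rel (r : ℕ) (bar : K2 →+* K2) (hq : bar qq = qq⁻¹) :
    ∀ ⦃x y : FUi r⦄, UiRel r x y → psiAux r bar x = psiAux r bar y := by
  intro x y h
  induction h with
  | kkinv i => simp only [map_mul, map_one, psiAux_gk, psiAux_gkinv]; exact urel_kinvk i
  | kinvk i => simp only [map_mul, map_one, psiAux_gk, psiAux_gkinv]; exact urel_kkinv i
  | kk i j => simp only [map_mul, psiAux_gk]; exact urel_kinvkinv i j
  | ke i j =>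
      simp only [map_mul, psiAux_smul, psiAux_gk, psiAux_ge, bar_zpow bar hq]
      exact urel_kinve i j
  | kf i j =>
      simp only [map_mul, psiAux_smul, psiAux_gk, psiAux_gf, bar_zpow bar hq, neg_neg]
      exact urel_kinvf i j
  | kt i => simp only [map_mul, psiAux_gk, psiAux_gt]; exact urel_kinvt i
  | ef i j =>
      by_cases hij : i = j
      · subst hij
        rw [if_pos rfl]
        simp only [map_sub, map_mul, psiAux_smul, psiAux_ge, psiAux_gf, psiAux_gk,
          psiAux_gkinv, bar_qminus bar hq]
        rw [urel_ef_eq i, ← neg_sub (uk i) (ukinv i), neg_smul_neg]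
      · rw [if_neg hij, map_zero]
        simp only [map_sub, map_mul, psiAux_ge, psiAux_gf]
        exact urel_ef_ne i j hij
  | ee i j h =>
      simp only [map_mul, psiAux_ge]; exact urel_ee i j h
  | ff i j h =>
      simp only [map_mul, psiAux_gf]; exact urel_ff i j h
  | et i h =>
      simp only [map_mul, psiAux_ge, psiAux_gt]; exact urel_et i h
  | ft i h =>
      simp only [map_mul, psiAux_gf, psiAux_gt]; exact urel_ft i h
  | serre_e i j h =>
      simp only [map_add, map_mul, psiAux_smul, psiAux_ge, bar_qplus bar hq]
      exact urel_serre_e i j h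
  | serre_f i j h =>
      simp only [map_add, map_mul, psiAux_smul, psiAux_gf, bar_qplus bar hq]
      exact urel_serre_f i j h
  | eet i h =>
      simp only [map_add, map_mul, psiAux_smul, psiAux_ge, psiAux_gt, bar_qplus bar hq]
      exact urel_eet i h
  | fft i h =>
      simp only [map_add, map_mul, psiAux_smul, psiAux_gf, psiAux_gt, bar_qplus bar hq]
      exact urel_fft i h
  | tte i h =>
      simp only [map_add, map_mul, psiAux_smul, psiAux_ge, psiAux_gt, bar_qplus bar hq]
      exact urel_tte i h
  | ttf i h =>
      simp only [map_add, map_mul, psiAux_smul, psiAux_gf, psiAux_gt, bar_qplus bar hq]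
      exact urel_ttf i h

lemma mkAlgHom_eq_mkRingHom {r : ℕ} (z : FUi r) :
    RingQuot.mkAlgHom K2 (UiRel r) z = RingQuot.mkRingHom (UiRel r) z := by
  rw [← RingQuot.mkAlgHom_coe K2 (UiRel r)]
  rfl

/-- Any homomorphism satisfying `psiCond` sends `k_i⁻¹` to `k_i`. -/
lemma psiCond_ukinv {r : ℕ} (bar : K2 →+* K2) (ψ : Ui r →+* Ui r)
    (h : psiCond r bar ψ) (i : Fin r) : ψ (ukinv i) = uk i := by
  have h1 : ukinv i * ψ (ukinv i) = 1 := by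
    have h0 : ψ (uk i) * ψ (ukinv i) = 1 := by rw [← map_mul, urel_kkinv, map_one]
    rwa [h.2.1 i] at h0
  calc ψ (ukinv i) = (uk i * ukinv i) * ψ (ukinv i) := by rw [urel_kkinv, one_mul]
    _ = uk i * (ukinv i * ψ (ukinv i)) := by rw [mul_assoc]
    _ = uk i := by rw [h1, mul_one]

/-- there is a unique `ℚ`-algebra homomorphism `ψ_ı : U^ı → U^ı` which is
`bar`-semilinear and fixes `e_i, f_i, t` while sending `k_i ↦ k_i⁻¹`; moreover it is an
involution. -/
theorem psi_i_exists_unique (r : ℕ) (bar : K2 →+* K2)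
    (hp : bar pp = pp⁻¹) (hq : bar qq = qq⁻¹) :
    (∃! ψ : Ui r →+* Ui r, psiCond r bar ψ) ∧
    (∀ ψ : Ui r →+* Ui r, psiCond r bar ψ → ∀ x : Ui r, ψ (ψ x) = x) := by
  have hrel : ∀ ⦃x y : FUi r⦄, UiRel r x y → psiAux r bar x = psiAux r bar y :=
    psiAux_rel r bar hq
  let ψ₀ : Ui r →+* Ui r := RingQuot.lift ⟨psiAux r bar, hrel⟩
  have hmk : ∀ z : FUi r, ψ₀ (RingQuot.mkAlgHom K2 (UiRel r) z) = psiAux r bar z := by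
    intro z
    rw [mkAlgHom_eq_mkRingHom]
    exact RingQuot.lift_mkRingHom_apply (psiAux r bar) hrel z
  have hcond : psiCond r bar ψ₀ := by
    refine ⟨?_, ?_, ?_, ?_, ?_⟩
    · intro a x
      obtain ⟨z, rfl⟩ := RingQuot.mkAlgHom_surjective K2 (UiRel r) x
      rw [← map_smul, hmk, hmk, psiAux_smul]
    · intro i; rw [uk, hmk]; exact psiAux_gk bar i
    · intro i; rw [ue, hmk]; exact psiAux_ge bar i
    · intro i; rw [uf, hmk]; exact psiAux_gf bar i
    · rw [ut, hmk]; exact psiAux_gt bar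
  have key : ∀ ψ₁ ψ₂ : Ui r →+* Ui r, psiCond r bar ψ₁ → psiCond r bar ψ₂ → ψ₁ = ψ₂ := by
    intro ψ₁ ψ₂ h1 h2
    refine RingHom.ext fun x => ?_
    obtain ⟨z, rfl⟩ := RingQuot.mkAlgHom_surjective K2 (UiRel r) x
    induction z using FreeAlgebra.induction with
    | grade0 a =>
        rw [AlgHom.commutes, Algebra.algebraMap_eq_smul_one, h1.1, h2.1, map_one, map_one]
    | grade1 g =>
        cases g with
        | e i => show ψ₁ (ue i) = ψ₂ (ue i); rw [h1.2.2.1 i, h2.2.2.1 i]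
        | f i => show ψ₁ (uf i) = ψ₂ (uf i); rw [h1.2.2.2.1 i, h2.2.2.2.1 i]
        | k i => show ψ₁ (uk i) = ψ₂ (uk i); rw [h1.2.1 i, h2.2.1 i]
        | kinv i =>
            show ψ₁ (ukinv i) = ψ₂ (ukinv i)
            rw [psiCond_ukinv bar ψ₁ h1 i, psiCond_ukinv bar ψ₂ h2 i]
        | t => show ψ₁ ut = ψ₂ ut; rw [h1.2.2.2.2, h2.2.2.2.2]
    | mul a b ha hb => rw [map_mul, map_mul, map_mul, ha, hb]
    | add a b ha hb => rw [map_add, map_add, map_add, ha, hb]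
  have hinv : ∀ ψ : Ui r →+* Ui r, psiCond r bar ψ → ∀ x : Ui r, ψ (ψ x) = x := by
    intro ψ h x
    obtain ⟨z, rfl⟩ := RingQuot.mkAlgHom_surjective K2 (UiRel r) x
    induction z using FreeAlgebra.induction with
    | grade0 a =>
        rw [AlgHom.commutes, Algebra.algebraMap_eq_smul_one, h.1, map_one, h.1, map_one,
          bar_bar bar hp hq]
    | grade1 g =>
        cases g with
        | e i => show ψ (ψ (ue i)) = ue i; rw [h.2.2.1 i, h.2.2.1 i]
        | f i => show ψ (ψ (uf i)) = uf i; rw [h.2.2.2.1 i, h.2.2.2.1 i]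
        | k i => show ψ (ψ (uk i)) = uk i; rw [h.2.1 i, psiCond_ukinv bar ψ h i]
        | kinv i =>
            show ψ (ψ (ukinv i)) = ukinv i
            rw [psiCond_ukinv bar ψ h i, h.2.1 i]
        | t => show ψ (ψ ut) = ut; rw [h.2.2.2.2, h.2.2.2.2]
    | mul a b ha hb => rw [map_mul, map_mul, map_mul, ha, hb]
    | add a b ha hb => rw [map_add, map_add, map_add, ha, hb]
  exact ⟨⟨ψ₀, hcond, fun ψ' h' => key ψ' ψ₀ h' hcond⟩, hinv⟩
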